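/- Let κ > 0, φ > 0 and ν > 4, and set γ_k = (2^k · ν(ν−1)⋯(ν−k+1))^{−1} = (2^k ∏_{i=0}^{k−1}(ν−i))^{−1}. Then for every h = (h₁,h₂) ∈ ℝ² with h ≠ 0, the mixed fourth partial derivative of the Matérn covariance function satisfies ∂⁴C_κ^ν/∂h₁²∂h₂² (h) = γ₂·C_κ^{ν−2}(h) − γ₃·(h₁² + h₂²)·C_κ^{ν−3}(h) + γ₄·h₁²h₂²·C_κ^{ν−4}(h). (This is the covariance function of Example 3 with b₁ = b₂ = 0, B₁ = (1,0)^⊤ and B₂ = (0,1)^⊤: the field X₀ is differentiated in two different directions, so the covariance function of X oscillates in two directions.) -/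

import Mathlib

open Real

/-- The modified Bessel function of the second kind,
`K_ν(x) = ∫₀^∞ exp(−x cosh t) cosh(νt) dt`. -/
noncomputable def besselK (ν x : ℝ) : ℝ :=
  ∫ t in Set.Ioi (0 : ℝ), Real.exp (-x * Real.cosh t) * Real.cosh (ν * t)

/-- The Matérn covariance function on `ℝ²` with scale `κ`, variance parameter `φ²` and
shape parameter `ν`:
`C_κ^ν(h) = (2^{1−ν}φ²/(4π Γ(ν+1) κ^{2ν})) (κ‖h‖)^ν K_ν(κ‖h‖)`. -/
noncomputable def matern (κ φ ν : ℝ) (h : EuclideanSpace ℝ (Fin 2)) : ℝ :=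
  2 ^ (1 - ν) * φ ^ 2 / (4 * π * Real.Gamma (ν + 1) * κ ^ (2 * ν)) *
    (κ * ‖h‖) ^ ν * besselK ν (κ * ‖h‖)

/-- The partial derivative of `g : ℝ² → ℝ` in the `i`-th coordinate direction. -/
noncomputable def pderiv2 (i : Fin 2) (g : EuclideanSpace ℝ (Fin 2) → ℝ) :
    EuclideanSpace ℝ (Fin 2) → ℝ :=
  fun x => fderiv ℝ g x (EuclideanSpace.single i 1)

/-! At `h ≠ 0` the gradient of the Matérn covariance is `∇C^ν(h) = -(C^{ν-1}(h) / (2ν)) h`.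
This is the Bessel identity `(x^ν K_ν(x))' = -x^ν K_{ν-1}(x)`, which combines
`K_ν' = -(K_{ν-1} + K_{ν+1}) / 2` (differentiation under the integral sign) with the recurrence
`x (K_{ν+1} - K_{ν-1}) = 2ν K_ν` (integrate the derivative of `t ↦ e^{-x cosh t} sinh (νt)` over
`(0, ∞)`). So every partial derivative lowers the shape parameter by one, and four applications
of this rule together with the product rule produce the coefficients `γ₂, γ₃, γ₄`. -/

open MeasureTheory Set Filter Topology

lemma one_add_sq_div_two_le_cosh (t : ℝ) : 1 + t ^ 2 / 2 ≤ cosh t := by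
  have h := sum_le_hasSum (Finset.range 2) (fun n _ => by rw [pow_mul]; positivity)
    (Real.hasSum_cosh t)
  norm_num [Finset.sum_range_succ] at h
  linarith

lemma integrable_exp_mul_sub_mul_cosh (b : ℝ) {x : ℝ} (hx : 0 < x) :
    Integrable fun t => exp (b * t - x * cosh t) := by
  have hgauss : Integrable fun t : ℝ =>
      exp (b ^ 2 / (2 * x) - x) * exp (-(x / 2) * (t - b / x) ^ 2) :=
    ((integrable_exp_neg_mul_sq (by positivity)).comp_sub_right (b / x)).const_mul _
  refine hgauss.mono' (by fun_prop) (ae_of_all _ fun t => ?_)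
  rw [Real.norm_eq_abs, abs_of_pos (exp_pos _), ← exp_add, exp_le_exp]
  have hsq : b ^ 2 / (2 * x) - x + -(x / 2) * (t - b / x) ^ 2 = b * t - x - x * t ^ 2 / 2 := by
    field_simp; ring
  rw [hsq]
  nlinarith [mul_le_mul_of_nonneg_left (one_add_sq_div_two_le_cosh t) hx.le]

noncomputable def besselKIntegrand (ν x t : ℝ) : ℝ := exp (-x * cosh t) * cosh (ν * t)

lemma besselKIntegrand_pos (ν x t : ℝ) : 0 < besselKIntegrand ν x t :=
  mul_pos (exp_pos _) (cosh_pos _)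

lemma antitone_besselKIntegrand (ν t : ℝ) : Antitone fun x => besselKIntegrand ν x t := by
  intro x y hxy
  dsimp only [besselKIntegrand]
  gcongr

lemma integrable_besselKIntegrand (ν : ℝ) {x : ℝ} (hx : 0 < x) :
    Integrable (besselKIntegrand ν x) := by
  have h : besselKIntegrand ν x =
      fun t => (exp (ν * t - x * cosh t) + exp (-ν * t - x * cosh t)) / 2 := by
    ext t
    rw [besselKIntegrand, cosh_eq (ν * t), mul_div_assoc', mul_add, ← exp_add, ← exp_add]
    ring_nf
  rw [h]
  exact ((integrable_exp_mul_sub_mul_cosh ν hx).add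
    (integrable_exp_mul_sub_mul_cosh (-ν) hx)).div_const 2

lemma exp_mul_cosh_mul_cosh (ν x t : ℝ) :
    exp (-x * cosh t) * (cosh t * cosh (ν * t)) =
      (besselKIntegrand (ν - 1) x t + besselKIntegrand (ν + 1) x t) / 2 := by
  simp only [besselKIntegrand, sub_mul, add_mul, one_mul, cosh_sub, cosh_add]
  ring

lemma exp_mul_sinh_mul_sinh (ν x t : ℝ) :
    exp (-x * cosh t) * (sinh t * sinh (ν * t)) =
      (besselKIntegrand (ν + 1) x t - besselKIntegrand (ν - 1) x t) / 2 := by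
  simp only [besselKIntegrand, sub_mul, add_mul, one_mul, cosh_sub, cosh_add]
  ring

lemma hasDerivAt_besselKIntegrand (ν x t : ℝ) :
    HasDerivAt (besselKIntegrand ν · t)
      (-(besselKIntegrand (ν - 1) x t + besselKIntegrand (ν + 1) x t) / 2) x := by
  have h := (((hasDerivAt_neg x).mul_const (cosh t)).exp).mul_const (cosh (ν * t))
  refine h.congr_deriv ?_
  rw [neg_div, ← exp_mul_cosh_mul_cosh]
  ring

lemma hasDerivAt_besselK (ν : ℝ) {x : ℝ} (hx : 0 < x) :
    HasDerivAt (besselK ν) (-(besselK (ν - 1) x + besselK (ν + 1) x) / 2) x := by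
  have hInt (μ : ℝ) {y : ℝ} (hy : 0 < y) :
      Integrable (besselKIntegrand μ y) (volume.restrict (Ioi 0)) :=
    (integrable_besselKIntegrand μ hy).restrict
  have key := hasDerivAt_integral_of_dominated_loc_of_deriv_le
    (μ := volume.restrict (Ioi 0)) (F := besselKIntegrand ν)
    (F' := fun y t => -(besselKIntegrand (ν - 1) y t + besselKIntegrand (ν + 1) y t) / 2)
    (bound := fun t =>
      (besselKIntegrand (ν - 1) (x / 2) t + besselKIntegrand (ν + 1) (x / 2) t) / 2)
    (Ioi_mem_nhds (half_lt_self hx)) (Eventually.of_forall fun y => by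
      unfold besselKIntegrand; fun_prop) (hInt ν hx) (by unfold besselKIntegrand; fun_prop)
    (ae_of_all _ fun t y hy => ?_) (((hInt _ (half_pos hx)).add (hInt _ (half_pos hx))).div_const 2)
    (ae_of_all _ fun t y _ => hasDerivAt_besselKIntegrand ν y t)
  · rw [integral_div, integral_neg, integral_add (hInt _ hx) (hInt _ hx)] at key
    exact key.2
  · have h1 := antitone_besselKIntegrand (ν - 1) t (le_of_lt hy)
    have h2 := antitone_besselKIntegrand (ν + 1) t (le_of_lt hy)
    have h3 := besselKIntegrand_pos (ν - 1) y t
    have h4 := besselKIntegrand_pos (ν + 1) y t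
    dsimp only at h1 h2 ⊢
    rw [Real.norm_eq_abs, abs_le]
    constructor <;> linarith

lemma besselK_recurrence (ν : ℝ) {x : ℝ} (hx : 0 < x) :
    x * (besselK (ν + 1) x - besselK (ν - 1) x) = 2 * ν * besselK ν x := by
  set f : ℝ → ℝ := fun t => exp (-x * cosh t) * sinh (ν * t)
  set f' : ℝ → ℝ := fun t => ν * besselKIntegrand ν x t
    - x * ((besselKIntegrand (ν + 1) x t - besselKIntegrand (ν - 1) x t) / 2)
  have hInt (μ : ℝ) : IntegrableOn (besselKIntegrand μ x) (Ioi 0) :=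
    (integrable_besselKIntegrand μ hx).integrableOn
  have hderiv (t : ℝ) : HasDerivAt f (f' t) t := by
    have h := (((hasDerivAt_cosh t).const_mul (-x)).exp).mul
      ((hasDerivAt_sinh (ν * t)).comp t ((hasDerivAt_id t).const_mul ν))
    refine h.congr_deriv ?_
    simp only [f']
    rw [← exp_mul_sinh_mul_sinh]
    simp only [besselKIntegrand, Function.comp_apply]
    ring
  have hf'int : IntegrableOn f' (Ioi 0) :=
    ((hInt ν).const_mul ν).sub ((((hInt _).sub (hInt _)).div_const 2).const_mul x)
  have hfint : IntegrableOn f (Ioi 0) := by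
    refine (hInt ν).mono' (by fun_prop) (ae_of_all _ fun t => ?_)
    rw [Real.norm_eq_abs, abs_mul, abs_of_pos (exp_pos _), abs_sinh, besselKIntegrand,
      ← cosh_abs (ν * t)]
    exact mul_le_mul_of_nonneg_left (sinh_lt_cosh _).le (exp_pos _).le
  have hzero := integral_Ioi_of_hasDerivAt_of_tendsto (hderiv 0).continuousAt.continuousWithinAt
    (fun t _ => hderiv t) hf'int (tendsto_zero_of_hasDerivAt_of_integrableOn_Ioi
      (fun t _ => hderiv t) hf'int hfint)
  have hsplit : ∫ t in Ioi 0, f' t =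
      ν * besselK ν x - x * ((besselK (ν + 1) x - besselK (ν - 1) x) / 2) := by
    simp only [f']
    rw [integral_sub ((hInt ν).const_mul ν) ?_, integral_const_mul, integral_const_mul,
      integral_div, integral_sub (hInt _) (hInt _)]
    · rfl
    · exact (((hInt _).sub (hInt _)).div_const 2).const_mul x
  simp only [f, mul_zero, sinh_zero, sub_zero] at hzero
  linarith

lemma hasDerivAt_rpow_mul_besselK (ν : ℝ) {x : ℝ} (hx : 0 < x) :
    HasDerivAt (fun y => y ^ ν * besselK ν y) (-(x ^ ν * besselK (ν - 1) x)) x := by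
  refine ((hasDerivAt_rpow_const (Or.inl hx.ne')).mul (hasDerivAt_besselK ν hx)).congr_deriv ?_
  have hpow : x ^ ν = x ^ (ν - 1) * x := by rw [← rpow_add_one hx.ne', sub_add_cancel]
  rw [hpow]
  linear_combination -(x ^ (ν - 1) / 2) * besselK_recurrence ν hx

lemma hasFDerivAt_norm_of_ne_zero {E : Type*} [NormedAddCommGroup E] [InnerProductSpace ℝ E]
    {x : E} (hx : x ≠ 0) : HasFDerivAt (‖·‖) (‖x‖⁻¹ • innerSL ℝ x) x := by
  have h := (hasStrictFDerivAt_norm_sq x).hasFDerivAt.sqrt (by positivity)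
  simp only [sqrt_sq (norm_nonneg _)] at h
  refine h.congr_fderiv ?_
  ext v
  simp only [one_div, mul_inv_rev, smul_apply, coe_innerSL_apply, nsmul_eq_mul, Nat.cast_ofNat,
    smul_eq_mul]
  field_simp

local notation "ℝ²" => EuclideanSpace ℝ (Fin 2)

noncomputable def maternCoeff (κ φ ν : ℝ) : ℝ :=
  2 ^ (1 - ν) * φ ^ 2 / (4 * π * Real.Gamma (ν + 1) * κ ^ (2 * ν))

lemma matern_eq (κ φ ν : ℝ) (h : ℝ²) :
    matern κ φ ν h = maternCoeff κ φ ν * ((κ * ‖h‖) ^ ν * besselK ν (κ * ‖h‖)) :=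
  mul_assoc _ _ _

lemma maternCoeff_sub_one (φ : ℝ) {κ ν : ℝ} (hκ : 0 < κ) (hν : 0 < ν) :
    maternCoeff κ φ (ν - 1) = 2 * ν * κ ^ 2 * maternCoeff κ φ ν := by
  have h2 : (2 : ℝ) ^ (1 - (ν - 1)) = 2 * 2 ^ (1 - ν) := by
    rw [show 1 - (ν - 1) = 1 + (1 - ν) by ring, rpow_add two_pos, rpow_one]
  have hκ2 : κ ^ (2 * ν) = κ ^ (2 * (ν - 1)) * κ ^ 2 := by
    rw [show 2 * ν = 2 * (ν - 1) + 2 by ring, rpow_add hκ, rpow_two]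
  have hΓ := (Gamma_pos_of_pos hν).ne'
  have hκν := (rpow_pos_of_pos hκ (2 * (ν - 1))).ne'
  rw [maternCoeff, maternCoeff, sub_add_cancel, Gamma_add_one hν.ne', h2, hκ2]
  field_simp

lemma hasFDerivAt_matern (φ : ℝ) {κ ν : ℝ} (hκ : 0 < κ) (hν : 0 < ν)
    {h : ℝ²} (hh : h ≠ 0) :
    HasFDerivAt (matern κ φ ν) ((-(matern κ φ (ν - 1) h / (2 * ν))) • innerSL ℝ h) h := by
  have hr : 0 < ‖h‖ := norm_pos_iff.mpr hh
  have hd := (((hasDerivAt_rpow_mul_besselK ν (mul_pos hκ hr)).comp_hasFDerivAt h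
    ((hasFDerivAt_norm_of_ne_zero hh).const_mul κ)).const_mul (maternCoeff κ φ ν))
  rw [show matern κ φ ν = _ from funext (matern_eq κ φ ν)]
  refine hd.congr_fderiv ?_
  simp only [smul_smul]
  rw [matern_eq, maternCoeff_sub_one φ hκ hν]
  congr 1
  have hpow : (κ * ‖h‖) ^ ν = (κ * ‖h‖) ^ (ν - 1) * (κ * ‖h‖) := by
    rw [← rpow_add_one (mul_pos hκ hr).ne', sub_add_cancel]
  rw [hpow]
  field_simp

lemma pderiv2_eq_of_hasFDerivAt {g f : ℝ² → ℝ} {f' : ℝ² →L[ℝ] ℝ} {x : ℝ²} (i : Fin 2)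
    (hfg : ∀ y ≠ 0, g y = f y) (hx : x ≠ 0) (hf : HasFDerivAt f f' x) :
    pderiv2 i g x = f' (EuclideanSpace.single i 1) := by
  have hev : g =ᶠ[𝓝 x] f := eventually_ne_nhds hx |>.mono hfg
  rw [pderiv2, hev.fderiv_eq, hf.fderiv]

lemma hasFDerivAt_coord (i : Fin 2) (x : ℝ²) :
    HasFDerivAt (fun y : ℝ² => y i) (EuclideanSpace.proj (𝕜 := ℝ) i) x :=
  (EuclideanSpace.proj (𝕜 := ℝ) i).hasFDerivAt

section
variable (φ : ℝ) {κ ν : ℝ} {x : ℝ²}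

lemma pderiv2_matern (hκ : 0 < κ) (hν : 0 < ν) (hx : x ≠ 0) (i : Fin 2) :
    pderiv2 i (matern κ φ ν) x = -(x i / (2 * ν)) * matern κ φ (ν - 1) x := by
  rw [pderiv2_eq_of_hasFDerivAt i (fun _ _ => rfl) hx (hasFDerivAt_matern φ hκ hν hx)]
  simp only [neg_smul, neg_apply, smul_apply, coe_innerSL_apply, EuclideanSpace.inner_single_right,
    ringHom_apply, one_mul, smul_eq_mul, neg_mul, neg_inj]
  ring

lemma pderiv2_pderiv2_matern (hκ : 0 < κ) (hν : 1 < ν) (hx : x ≠ 0) (i : Fin 2) :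
    pderiv2 i (pderiv2 i (matern κ φ ν)) x =
      -(1 / (2 * ν)) * matern κ φ (ν - 1) x
        + x i ^ 2 / (4 * ν * (ν - 1)) * matern κ φ (ν - 2) x := by
  have hf := ((hasFDerivAt_coord i x).fun_mul
    (hasFDerivAt_matern φ hκ (by linarith : 0 < ν - 1) hx)).const_mul (-(1 / (2 * ν)))
  rw [pderiv2_eq_of_hasFDerivAt i (fun y hy => by
    rw [pderiv2_matern φ hκ (by linarith) hy i]; ring) hx hf]
  simp only [one_div, mul_inv_rev, neg_smul, smul_neg, smul_add, neg_neg, add_apply, smul_apply,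
    coe_innerSL_apply, EuclideanSpace.inner_single_right, ringHom_apply, one_mul, smul_eq_mul,
    neg_apply, PiLp.proj_apply, PiLp.single_eq_same, mul_one, neg_mul]
  field_simp
  -- `ring_nf` also identifies the shape parameters `ν - 1 - 1` and `ν - 2` inside `matern`.
  ring_nf

lemma pderiv2_pderiv2_pderiv2_matern (hκ : 0 < κ) (hν : 2 < ν) (hx : x ≠ 0) {i j : Fin 2}
    (hij : j ≠ i) :
    pderiv2 j (pderiv2 i (pderiv2 i (matern κ φ ν))) x =
      x j / (4 * ν * (ν - 1)) * matern κ φ (ν - 2) x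
        - x i ^ 2 * x j / (8 * ν * (ν - 1) * (ν - 2)) * matern κ φ (ν - 3) x := by
  have hxi := hasFDerivAt_coord i x
  have hC₁ := hasFDerivAt_matern φ hκ (by linarith : 0 < ν - 1) hx
  have hC₂ := hasFDerivAt_matern φ hκ (by linarith : 0 < ν - 2) hx
  have hf := (hC₁.const_mul (-(1 / (2 * ν)))).fun_add
    (((hxi.fun_mul hxi).fun_mul hC₂).const_mul (1 / (4 * ν * (ν - 1))))
  rw [pderiv2_eq_of_hasFDerivAt j (fun y hy => by
    rw [pderiv2_pderiv2_matern φ hκ (by linarith) hy i]; ring) hx hf]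
  simp only [one_div, mul_inv_rev, neg_smul, smul_neg, neg_neg, smul_add, add_apply, smul_apply,
    coe_innerSL_apply, EuclideanSpace.inner_single_right, ringHom_apply, one_mul, smul_eq_mul,
    neg_apply, PiLp.proj_apply, ne_eq, hij.symm, not_false_eq_true, PiLp.single_eq_of_ne,
    mul_zero, add_zero]
  field_simp
  ring_nf

lemma pderiv2_pderiv2_pderiv2_pderiv2_matern (hκ : 0 < κ) (hν : 3 < ν) (hx : x ≠ 0) {i j : Fin 2}
    (hij : j ≠ i) :
    pderiv2 j (pderiv2 j (pderiv2 i (pderiv2 i (matern κ φ ν)))) x =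
      1 / (4 * ν * (ν - 1)) * matern κ φ (ν - 2) x
        - (x i ^ 2 + x j ^ 2) / (8 * ν * (ν - 1) * (ν - 2)) * matern κ φ (ν - 3) x
        + x i ^ 2 * x j ^ 2 / (16 * ν * (ν - 1) * (ν - 2) * (ν - 3)) * matern κ φ (ν - 4) x := by
  have hxi := hasFDerivAt_coord i x
  have hxj := hasFDerivAt_coord j x
  have hC₂ := hasFDerivAt_matern φ hκ (by linarith : 0 < ν - 2) hx
  have hC₃ := hasFDerivAt_matern φ hκ (by linarith : 0 < ν - 3) hx
  have hf := ((hxj.fun_mul hC₂).const_mul (1 / (4 * ν * (ν - 1)))).fun_sub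
    ((((hxi.fun_mul hxi).fun_mul hxj).fun_mul hC₃).const_mul (1 / (8 * ν * (ν - 1) * (ν - 2))))
  rw [pderiv2_eq_of_hasFDerivAt j (fun y hy => by
    rw [pderiv2_pderiv2_pderiv2_matern φ hκ (by linarith) hy hij]; ring) hx hf]
  simp only [one_div, mul_inv_rev, neg_smul, smul_neg, smul_add, sub_apply, add_apply, neg_apply,
    smul_apply, coe_innerSL_apply, EuclideanSpace.inner_single_right, ringHom_apply, one_mul,
    smul_eq_mul, PiLp.proj_apply, PiLp.single_eq_same, mul_one, ne_eq, hij.symm, not_false_eq_true,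
    PiLp.single_eq_of_ne, mul_zero, add_zero]
  have : ν - 2 ≠ 0 := by linarith
  have : ν - 3 ≠ 0 := by linarith
  field_simp
  ring_nf

end

theorem matern_mixed_fourth_partial_general (κ φ ν : ℝ) (hκ : 0 < κ) (hν : 4 < ν)
    (h : EuclideanSpace ℝ (Fin 2)) (hh : h ≠ 0) :
    (pderiv2 0)^[2] ((pderiv2 1)^[2] (matern κ φ ν)) h
      = (2 ^ 2 * ∏ i ∈ Finset.range 2, (ν - i))⁻¹ * matern κ φ (ν - 2) h
        - (2 ^ 3 * ∏ i ∈ Finset.range 3, (ν - i))⁻¹ * (h 0 ^ 2 + h 1 ^ 2)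
            * matern κ φ (ν - 3) h
        + (2 ^ 4 * ∏ i ∈ Finset.range 4, (ν - i))⁻¹ * (h 0 ^ 2 * h 1 ^ 2)
            * matern κ φ (ν - 4) h := by
  rw [Function.iterate_succ_apply, Function.iterate_one, Function.iterate_succ_apply,
    Function.iterate_one,
    pderiv2_pderiv2_pderiv2_pderiv2_matern φ hκ (by linarith) hh (by decide : (0 : Fin 2) ≠ 1)]
  have : ν ≠ 0 := by linarith
  have : ν - 1 ≠ 0 := by linarith
  have : ν - 2 ≠ 0 := by linarith
  have : ν - 3 ≠ 0 := by linarith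
  simp only [Finset.prod_range_succ, Finset.prod_range_zero, Nat.cast_ofNat, Nat.cast_one,
    Nat.cast_zero]
  field_simp
  ring

/-- Example 3 with `b₁ = b₂ = 0`, `B₁ = (1,0)^⊤`, `B₂ = (0,1)^⊤`: the mixed fourth partial
derivative of the Matérn covariance satisfies
`∂⁴C_κ^ν/∂h₁²∂h₂²(h) = γ₂ C_κ^{ν−2}(h) − γ₃ (h₁²+h₂²) C_κ^{ν−3}(h) + γ₄ h₁²h₂² C_κ^{ν−4}(h)`,
where `γ_k = (2^k ∏_{i=0}^{k−1}(ν−i))⁻¹`. -/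
theorem matern_mixed_fourth_partial (κ φ ν : ℝ) (hκ : 0 < κ) (hφ : 0 < φ) (hν : 4 < ν)
    (h : EuclideanSpace ℝ (Fin 2)) (hh : h ≠ 0) :
    (pderiv2 0)^[2] ((pderiv2 1)^[2] (matern κ φ ν)) h
      = (2 ^ 2 * ∏ i ∈ Finset.range 2, (ν - i))⁻¹ * matern κ φ (ν - 2) h
        - (2 ^ 3 * ∏ i ∈ Finset.range 3, (ν - i))⁻¹ * (h 0 ^ 2 + h 1 ^ 2)
            * matern κ φ (ν - 3) h
        + (2 ^ 4 * ∏ i ∈ Finset.range 4, (ν - i))⁻¹ * (h 0 ^ 2 * h 1 ^ 2)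
            * matern κ φ (ν - 4) h :=
  matern_mixed_fourth_partial_general κ φ ν hκ hν h hh
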